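/- arXiv:1103.4406 — 2 statements merged into one kernel-verified Lean document; each statement's English description precedes it below -/
import Mathlib

section
/- (Corollary 2: upper bound on K for IA with partial coordination.) Let m ≥ 1, n ≥ 1, and K ≥ 1 be natural numbers, set c = m + n and r = c mod 2, and let d̃ = (c − r)/4 > 0 as a rational number. Define the number of equations N_e = K·(K−1)·d̃² and the number of variables N_v = K·d̃·(c + n − 2d̃). Then N_e ≤ N_v if and only if K ≤ 3 + 4·(n + r)/(c − r) (as rational numbers). -/
theorem mul_sub_one_mul_sq_le_mul_mul_sub_iff {α : Type*} [Field α] [LinearOrder α]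
    [IsStrictOrderedRing α] {K d a : α} (hK : 0 < K) (hd : 0 < d) :
    K * (K - 1) * d ^ 2 ≤ K * d * (a - 2 * d) ↔ K ≤ (a - d) / d := by
  rw [le_div_iff₀ hd, show K * (K - 1) * d ^ 2 = K * d * ((K - 1) * d) by ring,
    mul_le_mul_iff_right₀ (mul_pos hK hd)]
  constructor <;> intro h <;> linarith

theorem stmt_4_general (n K : ℕ) (hK : 1 ≤ K)
    (c : ℕ) (r : ℕ)
    (dtil : ℚ) (hd : dtil = ((c : ℚ) - (r : ℚ)) / 4) (hdpos : 0 < dtil)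
    (Ne Nv : ℚ) (hNe : Ne = (K : ℚ) * ((K : ℚ) - 1) * dtil ^ 2)
    (hNv : Nv = (K : ℚ) * dtil * ((c : ℚ) + (n : ℚ) - 2 * dtil)) :
    Ne ≤ Nv ↔ (K : ℚ) ≤ 3 + 4 * ((n : ℚ) + (r : ℚ)) / ((c : ℚ) - (r : ℚ)) := by
  have hKpos : (0 : ℚ) < K := by exact_mod_cast hK
  have hcr : (c : ℚ) - r ≠ 0 := by linarith
  rw [hNe, hNv, mul_sub_one_mul_sq_le_mul_mul_sub_iff hKpos hdpos, hd]
  congr! 1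
  field_simp
  ring

/-- Corollary 2 (upper bound on `K` for IA with partial coordination): with
`c = m + n`, `r = c mod 2`, `d̃ = (c - r)/4 > 0`, `N_e = K(K-1)d̃²` and
`N_v = K·d̃·(c + n - 2d̃)`, we have `N_e ≤ N_v` iff `K ≤ 3 + 4(n + r)/(c - r)`. -/
theorem stmt_4 (m n K : ℕ) (hm : 1 ≤ m) (hn : 1 ≤ n) (hK : 1 ≤ K)
    (c : ℕ) (hc : c = m + n) (r : ℕ) (hr : r = c % 2)
    (dtil : ℚ) (hd : dtil = ((c : ℚ) - (r : ℚ)) / 4) (hdpos : 0 < dtil)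
    (Ne Nv : ℚ) (hNe : Ne = (K : ℚ) * ((K : ℚ) - 1) * dtil ^ 2)
    (hNv : Nv = (K : ℚ) * dtil * ((c : ℚ) + (n : ℚ) - 2 * dtil)) :
    Ne ≤ Nv ↔ (K : ℚ) ≤ 3 + 4 * ((n : ℚ) + (r : ℚ)) / ((c : ℚ) - (r : ℚ)) :=
  stmt_4_general n K hK c r dtil hd hdpos Ne Nv hNe hNv
end

section
/- (Remark 2.) Let m ≥ 1, n ≥ 1 be natural numbers with c = m + n and r = c mod 2, let d̃ = (c − r)/4 > 0 as a rational number, and suppose m = n + r or n = m + r. Then 5 ≤ 3 + 4·(n + r)/(c − r); consequently, for every natural number K ≤ 5 the properness condition K·d̃ ≤ c + n − d̃ holds. -/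
/-- Remark 2: with `c = m + n`, `r = c mod 2`, `d̃ = (c - r)/4 > 0` and
`m = n + r` or `n = m + r`, one has `5 ≤ 3 + 4(n + r)/(c - r)`; consequently the
properness condition `K·d̃ ≤ c + n - d̃` holds for every `K ≤ 5`. -/
theorem stmt_5 (m n : ℕ) (hm : 1 ≤ m) (hn : 1 ≤ n)
    (c : ℕ) (hc : c = m + n) (r : ℕ) (hr : r = c % 2)
    (dtil : ℚ) (hd : dtil = ((c : ℚ) - (r : ℚ)) / 4) (hdpos : 0 < dtil)
    (hmn : m = n + r ∨ n = m + r) :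
    (5 : ℚ) ≤ 3 + 4 * ((n : ℚ) + (r : ℚ)) / ((c : ℚ) - (r : ℚ)) ∧
      ∀ K : ℕ, K ≤ 5 → (K : ℚ) * dtil ≤ (c : ℚ) + (n : ℚ) - dtil := by
  have hcr : (0 : ℚ) < (c : ℚ) - r := by
    rw [hd] at hdpos; linarith
  have hcQ : (c : ℚ) = (m : ℚ) + n := by exact_mod_cast hc
  have hrQ : (0 : ℚ) ≤ (r : ℚ) := by positivity
  have key : 2 * ((c : ℚ) - r) ≤ 4 * ((n : ℚ) + r) := by
    rcases hmn with h | h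
    · have : (m : ℚ) = (n : ℚ) + r := by exact_mod_cast h
      linarith
    · have : (n : ℚ) = (m : ℚ) + r := by exact_mod_cast h
      linarith
  constructor
  · have h2 : (2 : ℚ) ≤ 4 * ((n : ℚ) + r) / ((c : ℚ) - r) := by
      rw [le_div_iff₀ hcr]; linarith
    linarith
  · intro K hK
    have hKQ : (K : ℚ) ≤ 5 := by exact_mod_cast hK
    have hdle : 6 * dtil ≤ (c : ℚ) + n := by
      rw [hd]
      -- 6*(c-r)/4 ≤ c+n  ⟺  3(c-r) ≤ 2(c+n)  ⟺  c ≤ 2n+3r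
      rcases hmn with h | h
      · have : (m : ℚ) = (n : ℚ) + r := by exact_mod_cast h
        linarith
      · have : (n : ℚ) = (m : ℚ) + r := by exact_mod_cast h
        linarith
    nlinarith [hdpos]
end
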